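/- arXiv:2306.07167 — 5 statements merged into one kernel-verified Lean document; each statement's English description precedes it below -/
import Mathlib

section
/- Let U and V be real Banach spaces, let A : U → V* (where V* denotes the continuous dual space of V) and J : U → ℝ be three times continuously Fréchet differentiable. Suppose u ∈ U satisfies A(u) = 0 in V*, and z ∈ V satisfies the adjoint equation (A'(u)v)(z) = J'(u)(v) for all v ∈ U. For ũ ∈ U and z̃ ∈ V define the primal residual ρ(ũ)(φ) := −(A(ũ))(φ) for φ ∈ V and the adjoint residual ρ*(ũ, z̃)(v) := J'(ũ)(v) − (A'(ũ)v)(z̃) for v ∈ U. Then, with e := u − ũ and e* := z − z̃, the error representation J(u) − J(ũ) = (1/2)·ρ(ũ)(e*) + (1/2)·ρ*(ũ, z̃)(e) + ρ(ũ)(z̃) + R⁽³⁾ holds, where the remainder is R⁽³⁾ := (1/2)·∫₀¹ [ J'''(ũ + s e)(e, e, e) − (A'''(ũ + s e)(e, e, e))(z̃ + s e*) − 3·(A''(ũ + s e)(e, e))(e*) ] · s(s − 1) ds. -/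
set_option maxHeartbeats 1000000

open Fin

section aux
variable {U W : Type*} [NormedAddCommGroup U] [NormedSpace ℝ U]
  [NormedAddCommGroup W] [NormedSpace ℝ W]

lemma dwr_line_hasDerivAt (ut e : U) (s : ℝ) :
    HasDerivAt (fun t : ℝ => ut + t • e) e s := by
  simpa using ((hasDerivAt_id s).smul_const e).const_add ut

lemma dwr_comp_line (g : U → W) (ut e : U) (s : ℝ)
    (hg : DifferentiableAt ℝ g (ut + s • e)) :
    HasDerivAt (fun t : ℝ => g (ut + t • e)) (fderiv ℝ g (ut + s • e) e) s :=
  hg.hasFDerivAt.comp_hasDerivAt s (dwr_line_hasDerivAt ut e s)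

variable {V : Type*} [NormedAddCommGroup V] [NormedSpace ℝ V]

lemma dwr_comp_line_apply (g : U → V →L[ℝ] W) (ut e : U) (v : V) (s : ℝ)
    (hg : DifferentiableAt ℝ g (ut + s • e)) :
    HasDerivAt (fun t : ℝ => g (ut + t • e) v) ((fderiv ℝ g (ut + s • e) e) v) s := by
  simpa using (dwr_comp_line g ut e s hg).clm_apply (hasDerivAt_const s v)

end aux

section aux2
variable {U V V' W : Type*} [NormedAddCommGroup U] [NormedSpace ℝ U]
  [NormedAddCommGroup V] [NormedSpace ℝ V]
  [NormedAddCommGroup V'] [NormedSpace ℝ V']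
  [NormedAddCommGroup W] [NormedSpace ℝ W]

lemma dwr_comp_line_apply2 (g : U → V →L[ℝ] (V' →L[ℝ] W)) (ut e : U) (v : V) (w : V') (s : ℝ)
    (hg : DifferentiableAt ℝ g (ut + s • e)) :
    HasDerivAt (fun t : ℝ => g (ut + t • e) v w) ((fderiv ℝ g (ut + s • e) e) v w) s := by
  simpa using (dwr_comp_line_apply g ut e v s hg).clm_apply (hasDerivAt_const s w)

end aux2

/-- **Dual-weighted-residual error representation (Theorem 1).**
Let `U`, `V` be real Banach spaces, `A : U → V*` and `J : U → ℝ` three times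
continuously Fréchet differentiable, `u` a solution of `A u = 0`, and `z` a solution of
the adjoint equation `(A'(u) v)(z) = J'(u)(v)` for all `v`.  Then for any `ut ∈ U`,
`zt ∈ V`, with `e = u - ut`, `e* = z - zt`,
`J(u) - J(ut) = ½ ρ(ut)(e*) + ½ ρ*(ut, zt)(e) + ρ(ut)(zt) + R⁽³⁾`. -/
theorem dwr_error_representation
    {U V : Type*} [NormedAddCommGroup U] [NormedSpace ℝ U] [CompleteSpace U]
    [NormedAddCommGroup V] [NormedSpace ℝ V] [CompleteSpace V]
    (A : U → (V →L[ℝ] ℝ)) (J : U → ℝ)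
    (hA : ContDiff ℝ 3 A) (hJ : ContDiff ℝ 3 J)
    (u : U) (z : V)
    (hu : A u = 0)
    (hz : ∀ v : U, (fderiv ℝ A u v) z = fderiv ℝ J u v)
    (ut : U) (zt : V) :
    J u - J ut =
      (1 / 2) * (-(A ut) (z - zt))
      + (1 / 2) * (fderiv ℝ J ut (u - ut) - (fderiv ℝ A ut (u - ut)) zt)
      + (-(A ut) zt)
      + (1 / 2) * ∫ s in (0:ℝ)..1,
          (iteratedFDeriv ℝ 3 J (ut + s • (u - ut)) ![u - ut, u - ut, u - ut]
            - (iteratedFDeriv ℝ 3 A (ut + s • (u - ut)) ![u - ut, u - ut, u - ut])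
                (zt + s • (z - zt))
            - 3 * (iteratedFDeriv ℝ 2 A (ut + s • (u - ut)) ![u - ut, u - ut]) (z - zt))
          * (s * (s - 1)) := by
  set e := u - ut with he
  set es := z - zt with hes
  -- abbreviations for derivatives
  set DJ := fderiv ℝ J with hDJ
  set D2J := fderiv ℝ DJ with hD2J
  set D3J := fderiv ℝ D2J with hD3J
  set DA := fderiv ℝ A with hDA
  set D2A := fderiv ℝ DA with hD2A
  letI : NormedAddCommGroup (U →L[ℝ] V →L[ℝ] ℝ) := inferInstance
  letI : NormedSpace ℝ (U →L[ℝ] V →L[ℝ] ℝ) := inferInstance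
  set D3A := fderiv ℝ D2A with hD3A
  -- smoothness facts
  have h21 : ((2 : WithTop ℕ∞) + 1 : WithTop ℕ∞) ≤ 3 := by norm_num
  have h11 : ((1 : WithTop ℕ∞) + 1 : WithTop ℕ∞) ≤ 2 := by norm_num
  have hJ1 : ContDiff ℝ 2 DJ := hJ.fderiv_right h21
  have hJ2 : ContDiff ℝ 1 D2J := hJ1.fderiv_right h11
  have hA1 : ContDiff ℝ 2 DA := hA.fderiv_right h21
  have hA2 : ContDiff ℝ 1 D2A := hA1.fderiv_right h11
  have hJd : Differentiable ℝ J := hJ.differentiable (by norm_num)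
  have hAd : Differentiable ℝ A := hA.differentiable (by norm_num)
  have hJ1d : Differentiable ℝ DJ := hJ1.differentiable (by norm_num)
  have hA1d : Differentiable ℝ DA := hA1.differentiable (by norm_num)
  have hJ2d : Differentiable ℝ D2J := hJ2.differentiable one_ne_zero
  have hA2d : Differentiable ℝ D2A := hA2.differentiable one_ne_zero
  -- path derivatives
  have hy : ∀ s : ℝ, HasDerivAt (fun t : ℝ => zt + t • es) es s :=
    fun s => dwr_line_hasDerivAt zt es s
  -- the functions
  set L : ℝ → ℝ := fun s => J (ut + s • e) - (A (ut + s • e)) (zt + s • es) with hLdef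
  set f : ℝ → ℝ := fun s =>
    DJ (ut + s • e) e - ((DA (ut + s • e) e) (zt + s • es) + (A (ut + s • e)) es) with hfdef
  set f2 : ℝ → ℝ := fun s =>
    D2J (ut + s • e) e e -
      (((D2A (ut + s • e) e e) (zt + s • es) + (DA (ut + s • e) e) es)
        + (DA (ut + s • e) e) es) with hf2def
  set f3 : ℝ → ℝ := fun s =>
    D3J (ut + s • e) e e e -
      ((((D3A (ut + s • e) e e e) (zt + s • es) + (D2A (ut + s • e) e e) es)
        + (D2A (ut + s • e) e e) es) + (D2A (ut + s • e) e e) es) with hf3def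
  have hL : ∀ s : ℝ, HasDerivAt L (f s) s := fun s =>
    (dwr_comp_line J ut e s (hJd _)).sub
      ((dwr_comp_line A ut e s (hAd _)).clm_apply (hy s))
  have hf : ∀ s : ℝ, HasDerivAt f (f2 s) s := fun s =>
    (dwr_comp_line_apply DJ ut e e s (hJ1d _)).sub
      (((dwr_comp_line_apply DA ut e e s (hA1d _)).clm_apply (hy s)).add
        (dwr_comp_line_apply A ut e es s (hAd _)))
  have hf2 : ∀ s : ℝ, HasDerivAt f2 (f3 s) s := fun s =>
    (dwr_comp_line_apply2 D2J ut e e e s (hJ2d _)).sub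
      ((((dwr_comp_line_apply2 D2A ut e e e s (hA2d _)).clm_apply (hy s)).add
          (dwr_comp_line_apply2 DA ut e e es s (hA1d _))).add
        (dwr_comp_line_apply2 DA ut e e es s (hA1d _)))
  -- continuity of f3
  have hxc : Continuous fun s : ℝ => ut + s • e := continuous_const.add (continuous_id.smul continuous_const)
  have hyc : Continuous fun s : ℝ => zt + s • es := continuous_const.add (continuous_id.smul continuous_const)
  have hD3Jc : Continuous D3J := hJ2.continuous_fderiv one_ne_zero
  have hD3Ac : Continuous D3A := hA2.continuous_fderiv one_ne_zero
  have hD2Ac : Continuous D2A := hA1.continuous_fderiv (by norm_num)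
  have hf3c : Continuous f3 := by
    have t1 : Continuous fun s : ℝ => D3J (ut + s • e) := hD3Jc.comp hxc
    have t2 : Continuous fun s : ℝ => D3A (ut + s • e) := hD3Ac.comp hxc
    have t3 : Continuous fun s : ℝ => D2A (ut + s • e) := hD2Ac.comp hxc
    have c1 : Continuous fun s : ℝ => D3J (ut + s • e) e e e :=
      ((t1.clm_apply continuous_const).clm_apply continuous_const).clm_apply continuous_const
    have c2 : Continuous fun s : ℝ => (D3A (ut + s • e) e e e) (zt + s • es) :=
      ((t2.clm_apply continuous_const).clm_apply continuous_const).clm_apply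
        continuous_const |>.clm_apply hyc
    have c3 : Continuous fun s : ℝ => (D2A (ut + s • e) e e) es :=
      (t3.clm_apply continuous_const).clm_apply continuous_const |>.clm_apply continuous_const
    exact c1.sub (((c2.add c3).add c3).add c3)
  -- rewrite the integrand
  have h3J : ∀ w : U, iteratedFDeriv ℝ 3 J w ![e, e, e] = D3J w e e e := by
    intro w
    have h := iteratedFDeriv_succ_apply_right (𝕜 := ℝ) (f := J) (x := w) (n := 2) ![e, e, e]
    rw [iteratedFDeriv_two_apply] at h
    simpa [Fin.init, hD3J, hD2J, hDJ] using h
  have h3A : ∀ w : U, iteratedFDeriv ℝ 3 A w ![e, e, e] = D3A w e e e := by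
    intro w
    have h := iteratedFDeriv_succ_apply_right (𝕜 := ℝ) (f := A) (x := w) (n := 2) ![e, e, e]
    rw [iteratedFDeriv_two_apply] at h
    simpa [Fin.init, hD3A, hD2A, hDA] using h
  have h2A : ∀ w : U, iteratedFDeriv ℝ 2 A w ![e, e] = D2A w e e := by
    intro w
    rw [iteratedFDeriv_two_apply]
    simp [hD2A, hDA]
  have hinteq : ∀ s : ℝ,
      (iteratedFDeriv ℝ 3 J (ut + s • e) ![e, e, e]
        - (iteratedFDeriv ℝ 3 A (ut + s • e) ![e, e, e]) (zt + s • es)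
        - 3 * (iteratedFDeriv ℝ 2 A (ut + s • e) ![e, e]) es) * (s * (s - 1))
      = f3 s * (s * (s - 1)) := by
    intro s
    rw [h3J, h3A, h2A, hf3def]
    ring
  have hrw : (∫ s in (0:ℝ)..1,
      (iteratedFDeriv ℝ 3 J (ut + s • e) ![e, e, e]
        - (iteratedFDeriv ℝ 3 A (ut + s • e) ![e, e, e]) (zt + s • es)
        - 3 * (iteratedFDeriv ℝ 2 A (ut + s • e) ![e, e]) es) * (s * (s - 1)))
      = ∫ s in (0:ℝ)..1, f3 s * (s * (s - 1)) :=
    intervalIntegral.integral_congr (fun s _ => hinteq s)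
  -- FTC for trapezoidal identity
  set G : ℝ → ℝ := fun s => f2 s * (s * (s - 1)) - f s * (2 * s - 1) + 2 * L s with hGdef
  have hG : ∀ s : ℝ, HasDerivAt G (f3 s * (s * (s - 1))) s := by
    intro s
    have hpoly : HasDerivAt (fun s : ℝ => s * (s - 1)) (2 * s - 1) s := by
      have h := (hasDerivAt_id s).mul ((hasDerivAt_id s).sub_const 1)
      simp only [id_eq] at h
      exact h.congr_deriv (by ring)
    have hlin : HasDerivAt (fun s : ℝ => 2 * s - 1) 2 s := by
      have h := ((hasDerivAt_id s).const_mul (2:ℝ)).sub_const 1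
      simp only [id_eq] at h
      exact h.congr_deriv (by ring)
    have := (((hf2 s).mul hpoly).sub ((hf s).mul hlin)).add ((hL s).const_mul 2)
    exact this.congr_deriv (by ring)
  have hint : (∫ s in (0:ℝ)..1, f3 s * (s * (s - 1))) = G 1 - G 0 :=
    intervalIntegral.integral_eq_sub_of_hasDerivAt (fun s _ => hG s)
      ((hf3c.mul ((continuous_id.mul (continuous_id.sub continuous_const)))).intervalIntegrable 0 1)
  -- endpoint values
  have hx0 : ut + (0:ℝ) • e = ut := by simp
  have hx1 : ut + e = u := by rw [he]; abel
  have hy0 : zt + (0:ℝ) • es = zt := by simp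
  have hy1 : zt + es = z := by rw [hes]; abel
  have hL1 : L 1 = J u := by simp [hLdef, hx1, hy1, hu]
  have hL0 : L 0 = J ut - (A ut) zt := by simp [hLdef, hx0, hy0]
  have hf1 : f 1 = 0 := by
    simp only [hfdef, one_smul, hx1, hy1, hu, hz e]
    simp
  have hf0 : f 0 = DJ ut e - ((DA ut e) zt + (A ut) es) := by
    simp [hfdef, hx0, hy0]
  have hG1 : G 1 = -f 1 + 2 * L 1 := by norm_num [hGdef]
  have hG0 : G 0 = f 0 + 2 * L 0 := by norm_num [hGdef]
  rw [hrw, hint, hG1, hG0, hf1, hf0, hL1, hL0]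
  ring
end

section
/- Let U and V be real Banach spaces, U₂ ⊆ U and V₂ ⊆ V closed linear subspaces, A : U → V* a map into the continuous dual of V, and J : U → ℝ. Let A₂ : U₂ → V₂* be defined by A₂(w) := (A(w))|_{V₂} (restriction of the functional A(w) to V₂) and J₂ := J|_{U₂}, and assume A₂ and J₂ are three times continuously Fréchet differentiable as maps on the Banach space U₂. Suppose u ∈ U satisfies A(u) = 0 in V* (so J(u) is the exact goal value), u₂ ∈ U₂ satisfies A₂(u₂) = 0 in V₂*, and z₂ ∈ V₂ satisfies (A₂'(u₂)v)(z₂) = J₂'(u₂)(v) for all v ∈ U₂. Define ρ₂(ũ)(φ) := −(A₂(ũ))(φ) for φ ∈ V₂ and ρ₂*(ũ, z̃)(v) := J₂'(ũ)(v) − (A₂'(ũ)v)(z̃) for v ∈ U₂. Then for any ũ ∈ U₂ and z̃ ∈ V₂, with ê := u₂ − ũ and ê* := z₂ − z̃, one has J(u) − J(ũ) = (J(u) − J(u₂)) + (1/2)·ρ₂(ũ)(ê*) + (1/2)·ρ₂*(ũ, z̃)(ê) + ρ₂(ũ)(z̃) + R₂⁽³⁾, where R₂⁽³⁾ := (1/2)·∫₀¹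 [ J₂'''(ũ + s ê)(ê, ê, ê) − (A₂'''(ũ + s ê)(ê, ê, ê))(z̃ + s ê*) − 3·(A₂''(ũ + s ê)(ê, ê))(ê*) ] · s(s − 1) ds. -/
private lemma line_deriv_iteratedFDeriv
    {E G : Type*} [NormedAddCommGroup E] [NormedSpace ℝ E]
    [NormedAddCommGroup G] [NormedSpace ℝ G]
    {F : E → G} {n : ℕ} (hd : Differentiable ℝ (iteratedFDeriv ℝ n F))
    (a e : E) (s : ℝ) :
    HasDerivAt (fun t : ℝ => iteratedFDeriv ℝ n F (a + t • e) (fun _ => e))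
      (iteratedFDeriv ℝ (n + 1) F (a + s • e) (fun _ => e)) s := by
  have hx : HasDerivAt (fun t : ℝ => a + t • e) e s := by
    simpa using ((hasDerivAt_id s).smul_const e).const_add a
  have h1 : HasDerivAt (fun t : ℝ => iteratedFDeriv ℝ n F (a + t • e))
      (fderiv ℝ (iteratedFDeriv ℝ n F) (a + s • e) e) s :=
    (hd (a + s • e)).hasFDerivAt.comp_hasDerivAt s hx
  have h2 := (ContinuousMultilinearMap.apply ℝ (fun _ : Fin n => E) G
      (fun _ => e)).hasFDerivAt.comp_hasDerivAt s h1
  have h3 : iteratedFDeriv ℝ (n + 1) F (a + s • e) (fun _ => e)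
      = (fderiv ℝ (iteratedFDeriv ℝ n F) (a + s • e) e) (fun _ => e) :=
    iteratedFDeriv_succ_apply_left _
  rw [h3]; exact h2

private lemma trapezoid {g0 g1 g2 g3 : ℝ → ℝ}
    (h0 : ∀ s, HasDerivAt g0 (g1 s) s)
    (h1 : ∀ s, HasDerivAt g1 (g2 s) s)
    (h2 : ∀ s, HasDerivAt g2 (g3 s) s)
    (h3 : Continuous g3) :
    g0 1 - g0 0 = (1/2) * (g1 0 + g1 1)
      + (1/2) * ∫ s in (0:ℝ)..1, g3 s * (s * (s - 1)) := by
  have c1 : Continuous g1 := continuous_iff_continuousAt.mpr fun s => (h1 s).continuousAt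
  have c2 : Continuous g2 := continuous_iff_continuousAt.mpr fun s => (h2 s).continuousAt
  have I1 : ∫ s in (0:ℝ)..1, g1 s = g0 1 - g0 0 :=
    intervalIntegral.integral_eq_sub_of_hasDerivAt (fun s _ => h0 s)
      (c1.intervalIntegrable 0 1)
  have I2 : ∫ s in (0:ℝ)..1, g1 s * (1:ℝ) =
      g1 1 * ((1:ℝ) - 1/2) - g1 0 * ((0:ℝ) - 1/2)
        - ∫ s in (0:ℝ)..1, g2 s * (s - 1/2) :=
    intervalIntegral.integral_mul_deriv_eq_deriv_mul
      (fun s _ => h1 s) (fun s _ => (hasDerivAt_id s).sub_const _)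
      (c2.intervalIntegrable 0 1) (continuous_const.intervalIntegrable 0 1)
  have I3 : ∫ s in (0:ℝ)..1, g2 s * (s - 1/2) =
      g2 1 * ((1:ℝ) * ((1:ℝ)-1) / 2) - g2 0 * ((0:ℝ) * ((0:ℝ)-1) / 2)
        - ∫ s in (0:ℝ)..1, g3 s * (s * (s-1) / 2) := by
    refine intervalIntegral.integral_mul_deriv_eq_deriv_mul
      (u := g2) (u' := g3) (v := fun s => s * (s-1) / 2) (v' := fun s => s - 1/2)
      (fun s _ => h2 s) (fun s _ => ?_)
      (h3.intervalIntegrable 0 1)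
      ((continuous_id.sub continuous_const).intervalIntegrable 0 1)
    have h := ((hasDerivAt_id s).mul ((hasDerivAt_id s).sub_const 1)).div_const 2
    refine h.congr_deriv ?_
    simp only [id_eq]
    ring
  have e1 : ∫ s in (0:ℝ)..1, g1 s = ∫ s in (0:ℝ)..1, g1 s * (1:ℝ) := by simp
  have e2 : ∫ s in (0:ℝ)..1, g3 s * (s * (s-1) / 2) =
      (1/2) * ∫ s in (0:ℝ)..1, g3 s * (s * (s-1)) := by
    rw [← intervalIntegral.integral_const_mul]
    refine intervalIntegral.integral_congr fun s _ => by ring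
  rw [e2] at I3
  norm_num at I2 I3
  linarith [I1, I2, I3, e1]

private lemma dwr_aux {E W : Type*} [NormedAddCommGroup E] [NormedSpace ℝ E]
    [NormedAddCommGroup W] [NormedSpace ℝ W]
    (A₂ : E → (W →L[ℝ] ℝ)) (J₂ : E → ℝ)
    (hA₂ : ContDiff ℝ 3 A₂) (hJ₂ : ContDiff ℝ 3 J₂)
    (u₂ : E) (hu₂ : A₂ u₂ = 0)
    (z₂ : W) (hz₂ : ∀ v : E, (fderiv ℝ A₂ u₂ v) z₂ = fderiv ℝ J₂ u₂ v)
    (ut : E) (zt : W) :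
    J₂ u₂ - J₂ ut =
      (1 / 2) * (-(A₂ ut) (z₂ - zt))
      + (1 / 2) * (fderiv ℝ J₂ ut (u₂ - ut) - (fderiv ℝ A₂ ut (u₂ - ut)) zt)
      + (-(A₂ ut) zt)
      + (1 / 2) * ∫ s in (0:ℝ)..1,
          (iteratedFDeriv ℝ 3 J₂ (ut + s • (u₂ - ut)) (fun _ => u₂ - ut)
            - (iteratedFDeriv ℝ 3 A₂ (ut + s • (u₂ - ut)) (fun _ => u₂ - ut))
                (zt + s • (z₂ - zt))
            - 3 * (iteratedFDeriv ℝ 2 A₂ (ut + s • (u₂ - ut)) (fun _ => u₂ - ut))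
                (z₂ - zt))
          * (s * (s - 1)) := by
  obtain ⟨e, he⟩ : ∃ e, u₂ - ut = e := ⟨_, rfl⟩
  obtain ⟨f, hf⟩ : ∃ f, z₂ - zt = f := ⟨_, rfl⟩
  rw [he, hf]
  have hx1 : ut + (1:ℝ) • e = u₂ := by rw [← he, one_smul]; abel
  have hy1 : zt + (1:ℝ) • f = z₂ := by rw [← hf, one_smul]; abel
  -- derivative facts along the line
  have hpd : ∀ n : ℕ, (n : WithTop ℕ∞) < 3 → ∀ s : ℝ, HasDerivAt
      (fun t : ℝ => iteratedFDeriv ℝ n J₂ (ut + t • e) (fun _ => e))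
      (iteratedFDeriv ℝ (n + 1) J₂ (ut + s • e) (fun _ => e)) s :=
    fun n hn s => line_deriv_iteratedFDeriv (hJ₂.differentiable_iteratedFDeriv hn) ut e s
  have hqd : ∀ n : ℕ, (n : WithTop ℕ∞) < 3 → ∀ s : ℝ, HasDerivAt
      (fun t : ℝ => iteratedFDeriv ℝ n A₂ (ut + t • e) (fun _ => e))
      (iteratedFDeriv ℝ (n + 1) A₂ (ut + s • e) (fun _ => e)) s :=
    fun n hn s => line_deriv_iteratedFDeriv (hA₂.differentiable_iteratedFDeriv hn) ut e s
  have hy' : ∀ s : ℝ, HasDerivAt (fun t : ℝ => zt + t • f) f s := fun s => by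
    simpa using ((hasDerivAt_id s).smul_const f).const_add zt
  have h0 : ∀ s : ℝ, HasDerivAt
      (fun t : ℝ => iteratedFDeriv ℝ 0 J₂ (ut + t • e) (fun _ => e)
        - (iteratedFDeriv ℝ 0 A₂ (ut + t • e) (fun _ => e)) (zt + t • f))
      (iteratedFDeriv ℝ 1 J₂ (ut + s • e) (fun _ => e)
        - (iteratedFDeriv ℝ 1 A₂ (ut + s • e) (fun _ => e)) (zt + s • f)
        - (iteratedFDeriv ℝ 0 A₂ (ut + s • e) (fun _ => e)) f) s := by
    intro s
    have h := (hpd 0 (by norm_num) s).sub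
      (((hqd 0 (by norm_num) s)).clm_apply (hy' s))
    refine h.congr_deriv ?_
    ring
  have h1 : ∀ s : ℝ, HasDerivAt
      (fun t : ℝ => iteratedFDeriv ℝ 1 J₂ (ut + t • e) (fun _ => e)
        - (iteratedFDeriv ℝ 1 A₂ (ut + t • e) (fun _ => e)) (zt + t • f)
        - (iteratedFDeriv ℝ 0 A₂ (ut + t • e) (fun _ => e)) f)
      (iteratedFDeriv ℝ 2 J₂ (ut + s • e) (fun _ => e)
        - (iteratedFDeriv ℝ 2 A₂ (ut + s • e) (fun _ => e)) (zt + s • f)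
        - 2 * (iteratedFDeriv ℝ 1 A₂ (ut + s • e) (fun _ => e)) f) s := by
    intro s
    have h := ((hpd 1 (by norm_num) s).sub
        ((hqd 1 (by norm_num) s).clm_apply (hy' s))).sub
      ((hqd 0 (by norm_num) s).clm_apply (hasDerivAt_const s f))
    refine h.congr_deriv ?_
    simp only [map_zero, add_zero]
    ring
  have h2 : ∀ s : ℝ, HasDerivAt
      (fun t : ℝ => iteratedFDeriv ℝ 2 J₂ (ut + t • e) (fun _ => e)
        - (iteratedFDeriv ℝ 2 A₂ (ut + t • e) (fun _ => e)) (zt + t • f)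
        - 2 * (iteratedFDeriv ℝ 1 A₂ (ut + t • e) (fun _ => e)) f)
      (iteratedFDeriv ℝ 3 J₂ (ut + s • e) (fun _ => e)
        - (iteratedFDeriv ℝ 3 A₂ (ut + s • e) (fun _ => e)) (zt + s • f)
        - 3 * (iteratedFDeriv ℝ 2 A₂ (ut + s • e) (fun _ => e)) f) s := by
    intro s
    have h := ((hpd 2 (by norm_num) s).sub
        ((hqd 2 (by norm_num) s).clm_apply (hy' s))).sub
      (((hqd 1 (by norm_num) s).clm_apply (hasDerivAt_const s f)).const_mul 2)
    refine h.congr_deriv ?_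
    simp only [map_zero, add_zero]
    ring
  -- continuity of the third-order integrand
  have hx_cont : Continuous (fun s : ℝ => ut + s • e) := by
    exact continuous_const.add (continuous_id.smul continuous_const)
  have hy_cont : Continuous (fun s : ℝ => zt + s • f) := by
    exact continuous_const.add (continuous_id.smul continuous_const)
  have cp3 : Continuous (fun s : ℝ => iteratedFDeriv ℝ 3 J₂ (ut + s • e) (fun _ => e)) :=
    (ContinuousMultilinearMap.apply ℝ (fun _ : Fin 3 => E) ℝ (fun _ => e)).continuous.comp
      ((hJ₂.continuous_iteratedFDeriv (by norm_num)).comp hx_cont)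
  have cq3 : Continuous (fun s : ℝ => iteratedFDeriv ℝ 3 A₂ (ut + s • e) (fun _ => e)) :=
    (ContinuousMultilinearMap.apply ℝ (fun _ : Fin 3 => E) (W →L[ℝ] ℝ)
        (fun _ => e)).continuous.comp
      ((hA₂.continuous_iteratedFDeriv (by norm_num)).comp hx_cont)
  have cq2 : Continuous (fun s : ℝ => iteratedFDeriv ℝ 2 A₂ (ut + s • e) (fun _ => e)) :=
    (ContinuousMultilinearMap.apply ℝ (fun _ : Fin 2 => E) (W →L[ℝ] ℝ)
        (fun _ => e)).continuous.comp
      ((hA₂.continuous_iteratedFDeriv (by norm_num)).comp hx_cont)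
  have h3 : Continuous (fun s : ℝ => iteratedFDeriv ℝ 3 J₂ (ut + s • e) (fun _ => e)
      - (iteratedFDeriv ℝ 3 A₂ (ut + s • e) (fun _ => e)) (zt + s • f)
      - 3 * (iteratedFDeriv ℝ 2 A₂ (ut + s • e) (fun _ => e)) f) :=
    (cp3.sub (cq3.clm_apply hy_cont)).sub
      (continuous_const.mul (cq2.clm_apply continuous_const))
  have key := trapezoid h0 h1 h2 h3
  -- evaluate the endpoints
  rw [hx1, hy1] at key
  simp only [zero_smul, add_zero, iteratedFDeriv_zero_apply, iteratedFDeriv_one_apply] at key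
  rw [hu₂] at key
  simp only [ContinuousLinearMap.zero_apply, hz₂ e, sub_self, zero_sub, sub_zero] at key
  linarith [key]


/-- **DWR error representation on enriched discrete subspaces (Corollary 1).**
`U₂ ⊆ U`, `V₂ ⊆ V` are closed subspaces, `A₂ = A|_{U₂}` (with values restricted to
functionals on `V₂`) and `J₂ = J|_{U₂}` are three times continuously Fréchet
differentiable, `u` solves `A u = 0`, `u₂` solves the enriched primal problem and
`z₂` the enriched adjoint problem.  Then for any `ut ∈ U₂`, `zt ∈ V₂`, with
`ê = u₂ - ut`, `ê* = z₂ - zt`,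
`J(u) - J(ut) = (J(u) - J(u₂)) + ½ ρ₂(ut)(ê*) + ½ ρ₂*(ut, zt)(ê) + ρ₂(ut)(zt) + R₂⁽³⁾`. -/
theorem dwr_error_representation_enriched
    {U V : Type*} [NormedAddCommGroup U] [NormedSpace ℝ U]
    [NormedAddCommGroup V] [NormedSpace ℝ V]
    (U₂ : Subspace ℝ U) (V₂ : Subspace ℝ V)
    (hU₂ : IsClosed (U₂ : Set U)) (hV₂ : IsClosed (V₂ : Set V))
    (A : U → (V →L[ℝ] ℝ)) (J : U → ℝ)
    (A₂ : U₂ → (V₂ →L[ℝ] ℝ)) (J₂ : U₂ → ℝ)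
    (hA₂def : ∀ (w : U₂) (φ : V₂), A₂ w φ = A (w : U) (φ : V))
    (hJ₂def : ∀ w : U₂, J₂ w = J (w : U))
    (hA₂ : ContDiff ℝ 3 A₂) (hJ₂ : ContDiff ℝ 3 J₂)
    (u : U) (hu : A u = 0)
    (u₂ : U₂) (hu₂ : A₂ u₂ = 0)
    (z₂ : V₂) (hz₂ : ∀ v : U₂, (fderiv ℝ A₂ u₂ v) z₂ = fderiv ℝ J₂ u₂ v)
    (ut : U₂) (zt : V₂) :
    J u - J (ut : U) =
      (J u - J₂ u₂)
      + (1 / 2) * (-(A₂ ut) (z₂ - zt))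
      + (1 / 2) * (fderiv ℝ J₂ ut (u₂ - ut) - (fderiv ℝ A₂ ut (u₂ - ut)) zt)
      + (-(A₂ ut) zt)
      + (1 / 2) * ∫ s in (0:ℝ)..1,
          (iteratedFDeriv ℝ 3 J₂ (ut + s • (u₂ - ut)) ![u₂ - ut, u₂ - ut, u₂ - ut]
            - (iteratedFDeriv ℝ 3 A₂ (ut + s • (u₂ - ut)) ![u₂ - ut, u₂ - ut, u₂ - ut])
                (zt + s • (z₂ - zt))
            - 3 * (iteratedFDeriv ℝ 2 A₂ (ut + s • (u₂ - ut)) ![u₂ - ut, u₂ - ut])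
                (z₂ - zt))
          * (s * (s - 1)) := by
  have m3 : (![u₂ - ut, u₂ - ut, u₂ - ut] : Fin 3 → U₂) = fun _ => u₂ - ut := by
    funext i; fin_cases i <;> rfl
  have m2 : (![u₂ - ut, u₂ - ut] : Fin 2 → U₂) = fun _ => u₂ - ut := by
    funext i; fin_cases i <;> rfl
  rw [m3, m2, ← hJ₂def ut]
  have H := dwr_aux A₂ J₂ hA₂ hJ₂ u₂ hu₂ z₂ hz₂ ut zt
  linarith [H]
end

section
/- Fix a dimension d ≥ 1 and real numbers p ≥ 2 and ε > 0, and define F : ℝᵈ → ℝᵈ by F(a) := (‖a‖² + ε²)^{(p−2)/2}·a, where ‖·‖ is the Euclidean norm. Then for all a, b ∈ ℝᵈ, ⟨F(a) − F(b), a − b⟩ ≥ ε^{p−2}·‖a − b‖², where ⟨·,·⟩ is the Euclidean inner product. -/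
open scoped RealInnerProductSpace

lemma key_ineq (s t α β m c : ℝ) (hs : 0 ≤ s) (ht : 0 ≤ t)
    (hmα : m ≤ α) (hmβ : m ≤ β) (hc : c ≤ s * t)
    (hord : 0 ≤ (s - t) * (α - β)) :
    m * (s ^ 2 + t ^ 2 - 2 * c) ≤ α * s ^ 2 + β * t ^ 2 - (α + β) * c := by
  nlinarith [sq_nonneg (s - t), mul_nonneg (by linarith : (0:ℝ) ≤ α + β - 2 * m) (by linarith : 0 ≤ s * t - c), mul_nonneg hord ht, mul_nonneg hord hs, sq_nonneg (s + t)]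

/-- **Strong monotonicity of the regularized p-Laplace flux for `p ≥ 2`.**
For `F(a) = (‖a‖² + ε²)^{(p-2)/2} a` with `p ≥ 2` and `ε > 0`,
`⟨F(a) - F(b), a - b⟩ ≥ ε^{p-2} ‖a - b‖²` for all `a, b ∈ ℝᵈ`. -/
theorem regularized_pLaplace_flux_strongly_monotone
    (d : ℕ) (hd : 1 ≤ d) (p ε : ℝ) (hp : 2 ≤ p) (hε : 0 < ε)
    (F : EuclideanSpace ℝ (Fin d) → EuclideanSpace ℝ (Fin d))
    (hF : ∀ a, F a = ((‖a‖ ^ 2 + ε ^ 2) ^ ((p - 2) / 2) : ℝ) • a) :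
    ∀ a b : EuclideanSpace ℝ (Fin d),
      ε ^ (p - 2) * ‖a - b‖ ^ 2 ≤ ⟪F a - F b, a - b⟫ := by
  intro a b
  set s := ‖a‖ with hsdef
  set t := ‖b‖ with htdef
  have hs : 0 ≤ s := norm_nonneg a
  have ht : 0 ≤ t := norm_nonneg b
  have hεs : (0:ℝ) < ε ^ 2 := by positivity
  set α := (s ^ 2 + ε ^ 2) ^ ((p - 2) / 2) with hαdef
  set β := (t ^ 2 + ε ^ 2) ^ ((p - 2) / 2) with hβdef
  set m := ε ^ (p - 2) with hmdef
  have hexp : (0:ℝ) ≤ (p - 2) / 2 := by linarith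
  have hm : m = (ε ^ 2) ^ ((p - 2) / 2) := by
    rw [hmdef, ← Real.rpow_natCast ε 2, ← Real.rpow_mul hε.le]
    congr 1; ring
  have hmα : m ≤ α := by
    rw [hm]; exact Real.rpow_le_rpow hεs.le (by nlinarith) hexp
  have hmβ : m ≤ β := by
    rw [hm]; exact Real.rpow_le_rpow hεs.le (by nlinarith) hexp
  have hord : 0 ≤ (s - t) * (α - β) := by
    rcases le_total s t with h | h
    · have : α ≤ β := Real.rpow_le_rpow (by positivity) (by nlinarith) hexp
      nlinarith
    · have : β ≤ α := Real.rpow_le_rpow (by positivity) (by nlinarith) hexp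
      exact mul_nonneg (by linarith) (by linarith)
  have hc : ⟪a, b⟫ ≤ s * t := real_inner_le_norm a b
  have hnorm : ‖a - b‖ ^ 2 = s ^ 2 + t ^ 2 - 2 * ⟪a, b⟫ := by
    rw [hsdef, htdef]
    rw [@norm_sub_sq_real]
    ring
  have hinner : ⟪F a - F b, a - b⟫ = α * s ^ 2 + β * t ^ 2 - (α + β) * ⟪a, b⟫ := by
    rw [hF a, hF b]
    simp only [inner_sub_left, inner_sub_right, real_inner_smul_left,
      real_inner_self_eq_norm_sq, real_inner_comm b a]
    ring
  rw [hinner, hnorm]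
  exact key_ineq s t α β m ⟪a, b⟫ hs ht hmα hmβ hc hord
end

section
/- Fix a dimension d ≥ 1 and real numbers p > 1 and ε > 0, and define F : ℝᵈ → ℝᵈ by F(a) := (‖a‖² + ε²)^{(p−2)/2}·a, where ‖·‖ is the Euclidean norm. Then F is strictly monotone: for all a, b ∈ ℝᵈ with a ≠ b, ⟨F(a) − F(b), a − b⟩ > 0, where ⟨·,·⟩ is the Euclidean inner product. Moreover, for 1 < p < 2 one has the quantitative bound ⟨F(a) − F(b), a − b⟩ ≥ (p − 1)·(max(‖a‖, ‖b‖)² + ε²)^{(p−2)/2}·‖a − b‖². -/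
open scoped RealInnerProductSpace

private lemma pLap_scalar (p ε : ℝ) (hp : 1 < p) (hε : 0 < ε) (δ U M q : ℝ)
    (hq : q = (p-2)/2) (hδ : 0 ≤ δ) (hU : ε^2 ≤ U)
    (hM : M^2 ≤ (U - ε^2)*δ) :
    min 1 (p-1) * U ^ q * δ ≤ U ^ (q-1) * (2*q*M^2 + U*δ) := by
  have hUpos : 0 < U := lt_of_lt_of_le (by positivity) hU
  have hUq : U ^ q = U ^ (q-1) * U := by
    rw [← Real.rpow_add_one hUpos.ne']; ring_nf
  have hW : 0 < U ^ (q-1) := Real.rpow_pos_of_pos hUpos _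
  rw [hUq]
  generalize U ^ (q-1) = W at hW ⊢
  subst hq
  rcases le_total p 2 with h2 | h2
  · have hmin : min 1 (p-1) = p-1 := min_eq_right (by linarith)
    rw [hmin]
    have h2q : 2*((p-2)/2) ≤ 0 := by linarith
    have e1 : 2*((p-2)/2)*((U-ε^2)*δ) + U*δ ≤ 2*((p-2)/2)*M^2 + U*δ := by nlinarith
    nlinarith [mul_le_mul_of_nonneg_left e1 hW.le,
      mul_nonneg (mul_nonneg hW.le hδ) (sq_nonneg ε)]
  · have hmin : min 1 (p-1) = 1 := min_eq_left (by linarith)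
    rw [hmin]
    have h2q : 0 ≤ 2*((p-2)/2) := by linarith
    nlinarith [mul_nonneg (mul_nonneg h2q hW.le) (sq_nonneg M)]

private lemma pLap_aux (d : ℕ) (p ε : ℝ) (hp : 1 < p) (hε : 0 < ε)
    (a b : EuclideanSpace ℝ (Fin d)) (K : ℝ)
    (hK : ∀ t ∈ Set.Icc (0:ℝ) 1,
      K ≤ min 1 (p-1) * ((‖b + t • (a - b)‖^2 + ε^2) ^ ((p-2)/2)) * ‖a - b‖^2) :
    K ≤ ⟪(((‖a‖^2+ε^2)^((p-2)/2) : ℝ) • a) - (((‖b‖^2+ε^2)^((p-2)/2) : ℝ) • b), a - b⟫ := by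
  set v := a - b with hv
  set β : ℝ := ‖b‖^2 with hβ
  set γ : ℝ := ⟪b, v⟫ with hγ
  set δ : ℝ := ‖v‖^2 with hδ
  set q : ℝ := (p-2)/2 with hq
  set u : ℝ → ℝ := fun t => β + 2*γ*t + δ*t^2 + ε^2 with hu
  set m : ℝ → ℝ := fun t => γ + δ*t with hm
  set h : ℝ → ℝ := fun t => u t ^ q * m t with hh
  have hnorm : ∀ t : ℝ, ‖b + t • v‖^2 = β + 2*γ*t + δ*t^2 := by
    intro t
    have hsm : ‖t • v‖^2 = t^2 * δ := by
      rw [norm_smul, mul_pow, Real.norm_eq_abs, sq_abs]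
    rw [norm_add_sq_real, real_inner_smul_right, hsm, ← hγ, ← hβ]
    ring
  have hu_pos : ∀ t : ℝ, 0 < u t := by
    intro t
    have h1 := hnorm t
    have h2 : (0:ℝ) ≤ ‖b + t • v‖^2 := sq_nonneg _
    have h3 : (0:ℝ) < ε^2 := by positivity
    simp only [hu]
    nlinarith
  have hm_eq : ∀ t : ℝ, m t = ⟪b + t • v, v⟫ := by
    intro t
    rw [inner_add_left, real_inner_smul_left, real_inner_self_eq_norm_sq, ← hγ, ← hδ]
    simp only [hm]
    ring
  have hCS : ∀ t : ℝ, (m t)^2 ≤ (β + 2*γ*t + δ*t^2) * δ := by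
    intro t
    rw [hm_eq t, ← hnorm t]
    have h1 := real_inner_mul_inner_self_le (b + t • v) v
    rw [real_inner_self_eq_norm_sq, real_inner_self_eq_norm_sq] at h1
    calc ⟪b + t • v, v⟫^2 = ⟪b + t • v, v⟫ * ⟪b + t • v, v⟫ := sq _
      _ ≤ ‖b + t • v‖^2 * ‖v‖^2 := h1
  have hderivh : ∀ t : ℝ, HasDerivAt h (u t ^ (q-1) * (2*q*(m t)^2 + u t * δ)) t := by
    intro t
    have hu' : HasDerivAt u (2*γ + δ*(2*t)) t := by
      have H := (((hasDerivAt_const t β).add ((hasDerivAt_id' (x := t)).const_mul (2*γ))).add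
        ((hasDerivAt_pow 2 t).const_mul δ)).add_const (ε^2)
      refine H.congr_deriv ?_
      push_cast
      ring
    have hm' : HasDerivAt m δ t := by
      exact (((hasDerivAt_id' (x := t)).const_mul δ).const_add γ).congr_deriv (mul_one δ)
    have hrpow : HasDerivAt (fun t => u t ^ q) (q * u t ^ (q-1) * (2*γ + δ*(2*t))) t :=
      (Real.hasDerivAt_rpow_const (Or.inl (hu_pos t).ne')).comp t hu'
    have H := hrpow.mul hm'
    refine H.congr_deriv ?_
    have huq : u t ^ q = u t ^ (q-1) * u t := by
      rw [← Real.rpow_add_one (hu_pos t).ne']; ring_nf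
    have hu2 : 2*γ + δ*(2*t) = 2 * m t := by simp only [hm]; ring
    rw [huq, hu2]
    ring
  have key : K * (1 - 0) ≤ h 1 - h 0 := by
    apply (convex_Icc (0:ℝ) 1).mul_sub_le_image_sub_of_le_deriv
      (fun t _ => (hderivh t).continuousAt.continuousWithinAt)
      (fun t _ => ((hderivh t).differentiableAt).differentiableWithinAt)
      _ 0 (by norm_num) 1 (by norm_num) (by norm_num)
    intro t ht
    rw [interior_Icc] at ht
    have ht' : t ∈ Set.Icc (0:ℝ) 1 := Set.mem_Icc.2 ⟨ht.1.le, ht.2.le⟩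
    rw [(hderivh t).deriv]
    refine le_trans (hK t ht') ?_
    have hrw : (‖b + t • v‖^2 + ε^2) = u t := by
      simp only [hu]; rw [hnorm t]
    rw [hrw]
    apply pLap_scalar p ε hp hε δ (u t) (m t) q hq (sq_nonneg _)
    · simp only [hu]
      nlinarith [hnorm t, sq_nonneg ‖b + t • v‖]
    · have := hCS t
      have h2 : u t - ε^2 = β + 2*γ*t + δ*t^2 := by simp only [hu]; ring
      rw [h2]
      exact this
  have hfinal : h 1 - h 0
      = ⟪(((‖a‖^2+ε^2)^((p-2)/2) : ℝ) • a) - (((‖b‖^2+ε^2)^((p-2)/2) : ℝ) • b), v⟫ := by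
    rw [inner_sub_left, real_inner_smul_left, real_inner_smul_left]
    have h1 : b + (1:ℝ) • v = a := by simp [hv]
    have hu1 : u 1 = ‖a‖^2 + ε^2 := by
      have := hnorm 1
      simp only [hu]
      rw [show β + 2*γ*1 + δ*1^2 + ε^2 = (β + 2*γ*1 + δ*1^2) + ε^2 by ring, ← this, h1]
    have hu0 : u 0 = ‖b‖^2 + ε^2 := by simp [hu, hβ]
    have hm1 : m 1 = ⟪a, v⟫ := by rw [hm_eq 1, h1]
    have hm0 : m 0 = ⟪b, v⟫ := by rw [hm_eq 0]; simp
    simp only [hh, hu1, hu0, hm1, hm0, hq]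
  linarith [key, hfinal.le, hfinal.ge]

private lemma pLap_seg (d : ℕ) (a b : EuclideanSpace ℝ (Fin d)) {t : ℝ}
    (ht : t ∈ Set.Icc (0:ℝ) 1) :
    ‖b + t • (a - b)‖^2 ≤ (max ‖a‖ ‖b‖)^2 := by
  obtain ⟨ht0, ht1⟩ := ht
  have h1 : b + t • (a - b) = (1-t) • b + t • a := by module
  have h2 : ‖b + t • (a - b)‖ ≤ max ‖a‖ ‖b‖ := by
    rw [h1]
    calc ‖(1-t) • b + t • a‖ ≤ ‖(1-t) • b‖ + ‖t • a‖ := norm_add_le _ _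
      _ = (1-t) * ‖b‖ + t * ‖a‖ := by
          rw [norm_smul, norm_smul, Real.norm_eq_abs, Real.norm_eq_abs,
            abs_of_nonneg (by linarith), abs_of_nonneg ht0]
      _ ≤ (1-t) * max ‖a‖ ‖b‖ + t * max ‖a‖ ‖b‖ :=
          add_le_add (mul_le_mul_of_nonneg_left (le_max_right _ _) (by linarith))
            (mul_le_mul_of_nonneg_left (le_max_left _ _) ht0)
      _ = max ‖a‖ ‖b‖ := by ring
  have h3 : (0:ℝ) ≤ ‖b + t • (a - b)‖ := norm_nonneg _
  nlinarith

/-- **Strict monotonicity of the regularized p-Laplace flux for `p > 1`.**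
For `F(a) = (‖a‖² + ε²)^{(p-2)/2} a` with `p > 1` and `ε > 0`, `F` is strictly
monotone, and for `1 < p < 2` one has the quantitative bound
`⟨F(a) - F(b), a - b⟩ ≥ (p-1)(max(‖a‖, ‖b‖)² + ε²)^{(p-2)/2} ‖a - b‖²`. -/
theorem regularized_pLaplace_flux_strictly_monotone
    (d : ℕ) (hd : 1 ≤ d) (p ε : ℝ) (hp : 1 < p) (hε : 0 < ε)
    (F : EuclideanSpace ℝ (Fin d) → EuclideanSpace ℝ (Fin d))
    (hF : ∀ a, F a = ((‖a‖ ^ 2 + ε ^ 2) ^ ((p - 2) / 2) : ℝ) • a) :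
    (∀ a b : EuclideanSpace ℝ (Fin d), a ≠ b → 0 < ⟪F a - F b, a - b⟫)
    ∧ (p < 2 →
        ∀ a b : EuclideanSpace ℝ (Fin d),
          (p - 1) * ((max ‖a‖ ‖b‖) ^ 2 + ε ^ 2) ^ ((p - 2) / 2) * ‖a - b‖ ^ 2
            ≤ ⟪F a - F b, a - b⟫) := by
  have hεsq : (0:ℝ) < ε^2 := by positivity
  constructor
  · intro a b hab
    rw [hF a, hF b]
    set M : ℝ := max ‖a‖ ‖b‖ with hM
    have hM2 : (0:ℝ) < M^2 + ε^2 := by positivity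
    set K : ℝ := min 1 (p-1) * min ((M^2+ε^2)^((p-2)/2)) ((ε^2)^((p-2)/2)) * ‖a-b‖^2
      with hKdef
    have h1 : 0 < min 1 (p-1) := lt_min one_pos (by linarith)
    have h2 : 0 < min ((M^2+ε^2)^((p-2)/2)) ((ε^2)^((p-2)/2)) :=
      lt_min (Real.rpow_pos_of_pos hM2 _) (Real.rpow_pos_of_pos hεsq _)
    have h3 : 0 < ‖a-b‖^2 := by
      have h := sub_ne_zero.2 hab
      exact pow_pos (norm_pos_iff.2 h) 2
    have hKpos : 0 < K := mul_pos (mul_pos h1 h2) h3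
    refine lt_of_lt_of_le hKpos (pLap_aux d p ε hp hε a b K ?_)
    intro t ht
    have hseg := pLap_seg d a b ht
    have hu_pos : (0:ℝ) < ‖b + t • (a - b)‖^2 + ε^2 := by positivity
    have hmin_le : min ((M^2+ε^2)^((p-2)/2)) ((ε^2)^((p-2)/2))
        ≤ (‖b + t • (a - b)‖^2 + ε^2) ^ ((p-2)/2) := by
      rcases le_total p 2 with h2 | h2
      · refine le_trans (min_le_left _ _) ?_
        exact Real.rpow_le_rpow_of_nonpos hu_pos (by nlinarith) (by linarith)
      · refine le_trans (min_le_right _ _) ?_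
        exact Real.rpow_le_rpow hεsq.le (by nlinarith [sq_nonneg ‖b + t • (a-b)‖])
          (by linarith)
    exact mul_le_mul_of_nonneg_right (mul_le_mul_of_nonneg_left hmin_le h1.le)
      (sq_nonneg _)
  · intro hp2 a b
    rw [hF a, hF b]
    set M : ℝ := max ‖a‖ ‖b‖ with hM
    have hM2 : (0:ℝ) < M^2 + ε^2 := by positivity
    apply pLap_aux d p ε hp hε a b
    intro t ht
    have hseg := pLap_seg d a b ht
    have hu_pos : (0:ℝ) < ‖b + t • (a - b)‖^2 + ε^2 := by positivity
    have hmin : min 1 (p-1) = p-1 := min_eq_right (by linarith)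
    rw [hmin]
    have hrp : (M^2+ε^2)^((p-2)/2) ≤ (‖b + t • (a - b)‖^2 + ε^2) ^ ((p-2)/2) :=
      Real.rpow_le_rpow_of_nonpos hu_pos (by nlinarith [hseg]) (by linarith)
    exact mul_le_mul_of_nonneg_right
      (mul_le_mul_of_nonneg_left hrp (by linarith : (0:ℝ) ≤ p - 1)) (sq_nonneg _)
end

section
/- Fix a dimension d ≥ 1 and real numbers p ≥ 2 and ε > 0, and define F : ℝᵈ → ℝᵈ by F(a) := (‖a‖² + ε²)^{(p−2)/2}·a, where ‖·‖ is the Euclidean norm. Then for all a, b ∈ ℝᵈ, ‖F(a) − F(b)‖ ≤ (p − 1)·(max(‖a‖, ‖b‖)² + ε²)^{(p−2)/2}·‖a − b‖. -/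
set_option maxHeartbeats 1000000

/-- **Local Lipschitz estimate for the regularized p-Laplace flux, `p ≥ 2`.**
For `F(a) = (‖a‖² + ε²)^{(p-2)/2} a` with `p ≥ 2` and `ε > 0`,
`‖F(a) - F(b)‖ ≤ (p-1)·(max(‖a‖, ‖b‖)² + ε²)^{(p-2)/2}·‖a - b‖` for all `a, b ∈ ℝᵈ`. -/
theorem regularized_pLaplace_flux_local_lipschitz
    (d : ℕ) (hd : 1 ≤ d) (p ε : ℝ) (hp : 2 ≤ p) (hε : 0 < ε)
    (F : EuclideanSpace ℝ (Fin d) → EuclideanSpace ℝ (Fin d))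
    (hF : ∀ a, F a = ((‖a‖ ^ 2 + ε ^ 2) ^ ((p - 2) / 2) : ℝ) • a) :
    ∀ a b : EuclideanSpace ℝ (Fin d),
      ‖F a - F b‖ ≤ (p - 1) * ((max ‖a‖ ‖b‖) ^ 2 + ε ^ 2) ^ ((p - 2) / 2) * ‖a - b‖ := by
  intro a b
  set q : ℝ := (p - 2) / 2 with hq_def
  have hq : 0 ≤ q := by rw [hq_def]; linarith
  set M : ℝ := max ‖a‖ ‖b‖ with hM_def
  have hM0 : 0 ≤ M := le_trans (norm_nonneg a) (le_max_left _ _)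
  set D : EuclideanSpace ℝ (Fin d) →
      (EuclideanSpace ℝ (Fin d) →L[ℝ] EuclideanSpace ℝ (Fin d)) := fun x =>
    (((‖x‖ ^ 2 + ε ^ 2) ^ q : ℝ) • (ContinuousLinearMap.id ℝ (EuclideanSpace ℝ (Fin d)))) +
      ((q * (‖x‖ ^ 2 + ε ^ 2) ^ (q - 1)) • (2 • (innerSL ℝ x))).smulRight x with hD
  -- the derivative of F
  have key : ∀ x, HasFDerivAt F (D x) x := by
    intro x
    have hpos : (0:ℝ) < ‖x‖ ^ 2 + ε ^ 2 := by positivity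
    have h1 : HasFDerivAt (fun y : EuclideanSpace ℝ (Fin d) => ‖y‖ ^ 2 + ε ^ 2)
        (2 • (innerSL ℝ x)) x := by
      simpa using ((hasFDerivAt_id x).norm_sq).add_const (ε ^ 2)
    have h2 : HasFDerivAt (fun y : EuclideanSpace ℝ (Fin d) => ((‖y‖ ^ 2 + ε ^ 2) ^ q : ℝ))
        ((q * (‖x‖ ^ 2 + ε ^ 2) ^ (q - 1)) • (2 • (innerSL ℝ x))) x :=
      h1.rpow_const (Or.inl hpos.ne')
    have h3 := h2.smul (hasFDerivAt_id x)
    refine HasFDerivAt.congr_of_eventuallyEq h3 ?_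
    filter_upwards with y
    rw [hF y]
    rfl
  -- bound on the derivative norm on the closed ball of radius M
  have bound : ∀ x ∈ Metric.closedBall (0 : EuclideanSpace ℝ (Fin d)) M,
      ‖D x‖ ≤ (p - 1) * (M ^ 2 + ε ^ 2) ^ q := by
    intro x hx
    rw [Metric.mem_closedBall, dist_zero_right] at hx
    have hpos : (0:ℝ) < ‖x‖ ^ 2 + ε ^ 2 := by positivity
    have hMpos : (0:ℝ) < M ^ 2 + ε ^ 2 := by positivity
    have hle : ‖x‖ ^ 2 + ε ^ 2 ≤ M ^ 2 + ε ^ 2 := by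
      have := pow_le_pow_left₀ (norm_nonneg x) hx 2
      linarith
    have hXq : (‖x‖ ^ 2 + ε ^ 2) ^ q ≤ (M ^ 2 + ε ^ 2) ^ q :=
      Real.rpow_le_rpow hpos.le hle hq
    have hC : 0 ≤ (p - 1) * (M ^ 2 + ε ^ 2) ^ q := by
      have : (0:ℝ) ≤ (M ^ 2 + ε ^ 2) ^ q := Real.rpow_nonneg hMpos.le q
      nlinarith
    refine ContinuousLinearMap.opNorm_le_bound _ hC ?_
    intro y
    have hDxy : D x y = ((‖x‖ ^ 2 + ε ^ 2) ^ q : ℝ) • y +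
        ((q * (‖x‖ ^ 2 + ε ^ 2) ^ (q - 1)) * (2 * inner ℝ x y)) • x := by
      rw [hD]
      simp [two_smul]
      ring_nf
    rw [hDxy]
    have step1 : ‖((‖x‖ ^ 2 + ε ^ 2) ^ q : ℝ) • y +
        ((q * (‖x‖ ^ 2 + ε ^ 2) ^ (q - 1)) * (2 * inner ℝ x y)) • x‖ ≤
        (‖x‖ ^ 2 + ε ^ 2) ^ q * ‖y‖ +
          (q * (‖x‖ ^ 2 + ε ^ 2) ^ (q - 1)) * (2 * (‖x‖ * ‖y‖)) * ‖x‖ := by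
      refine le_trans (norm_add_le _ _) ?_
      gcongr ?_ + ?_
      · rw [norm_smul, Real.norm_eq_abs, abs_of_nonneg (Real.rpow_nonneg hpos.le q)]
      · rw [norm_smul, Real.norm_eq_abs, abs_mul, abs_mul,
          abs_of_nonneg hq, abs_of_nonneg (Real.rpow_nonneg hpos.le _),
          abs_mul, abs_two]
        have hcs : |(inner ℝ x y : ℝ)| ≤ ‖x‖ * ‖y‖ := abs_real_inner_le_norm x y
        have h1 : 0 ≤ q * (‖x‖ ^ 2 + ε ^ 2) ^ (q - 1) := by
          have := Real.rpow_nonneg hpos.le (q - 1); positivity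
        nlinarith [norm_nonneg x, abs_nonneg (inner ℝ x y : ℝ), mul_le_mul_of_nonneg_left hcs h1,
          mul_le_mul_of_nonneg_right (mul_le_mul_of_nonneg_left hcs h1) (norm_nonneg x)]
    refine le_trans step1 ?_
    have hx2 : ‖x‖ ^ 2 ≤ ‖x‖ ^ 2 + ε ^ 2 := by nlinarith
    have hrec : (‖x‖ ^ 2 + ε ^ 2) ^ (q - 1) * (‖x‖ ^ 2 + ε ^ 2) = (‖x‖ ^ 2 + ε ^ 2) ^ q := by
      have h := Real.rpow_add hpos (q - 1) 1
      rw [Real.rpow_one] at h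
      rw [← h]
      norm_num
    have hstep : q * (‖x‖ ^ 2 + ε ^ 2) ^ (q - 1) * (2 * (‖x‖ * ‖y‖)) * ‖x‖ ≤
        2 * q * (‖x‖ ^ 2 + ε ^ 2) ^ q * ‖y‖ := by
      have h1 : 0 ≤ (‖x‖ ^ 2 + ε ^ 2) ^ (q - 1) := Real.rpow_nonneg hpos.le _
      have h2 : ‖x‖ * ‖x‖ ≤ ‖x‖ ^ 2 + ε ^ 2 := by nlinarith
      calc q * (‖x‖ ^ 2 + ε ^ 2) ^ (q - 1) * (2 * (‖x‖ * ‖y‖)) * ‖x‖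
          = 2 * q * ((‖x‖ ^ 2 + ε ^ 2) ^ (q - 1) * (‖x‖ * ‖x‖)) * ‖y‖ := by ring
        _ ≤ 2 * q * ((‖x‖ ^ 2 + ε ^ 2) ^ (q - 1) * (‖x‖ ^ 2 + ε ^ 2)) * ‖y‖ := by
            gcongr
        _ = 2 * q * (‖x‖ ^ 2 + ε ^ 2) ^ q * ‖y‖ := by rw [hrec]
    calc (‖x‖ ^ 2 + ε ^ 2) ^ q * ‖y‖ +
          q * (‖x‖ ^ 2 + ε ^ 2) ^ (q - 1) * (2 * (‖x‖ * ‖y‖)) * ‖x‖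
        ≤ (‖x‖ ^ 2 + ε ^ 2) ^ q * ‖y‖ + 2 * q * (‖x‖ ^ 2 + ε ^ 2) ^ q * ‖y‖ :=
          add_le_add_right hstep _
      _ = (1 + 2 * q) * (‖x‖ ^ 2 + ε ^ 2) ^ q * ‖y‖ := by ring
      _ ≤ (p - 1) * (M ^ 2 + ε ^ 2) ^ q * ‖y‖ := by
          have h1 : 1 + 2 * q = p - 1 := by rw [hq_def]; ring
          rw [h1]
          gcongr
          linarith
  have ha : a ∈ Metric.closedBall (0 : EuclideanSpace ℝ (Fin d)) M := by
    rw [Metric.mem_closedBall, dist_zero_right]; exact le_max_left _ _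
  have hb : b ∈ Metric.closedBall (0 : EuclideanSpace ℝ (Fin d)) M := by
    rw [Metric.mem_closedBall, dist_zero_right]; exact le_max_right _ _
  exact (convex_closedBall (0 : EuclideanSpace ℝ (Fin d)) M)
    |>.norm_image_sub_le_of_norm_hasFDerivWithin_le
    (fun x _ => (key x).hasFDerivWithinAt) bound hb ha
end
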